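/- Strang splitting is second-order accurate for bounded linear operators: ‖e^{Δt(A+B)} − e^{(Δt/2)A} e^{ΔtB} e^{(Δt/2)A}‖ ≤ C Δt³ for Δt ∈ [0,1], with C depending only on ‖A‖, ‖B‖. -/

import Mathlib

/-!
Write `T(r) = 1 + r + r²/2`. In a unital Banach algebra `exp x = 1 + x + x²/2 + R` with
`‖R‖ ≤ eʳ - T(r)` whenever `‖x‖ ≤ r`: the tail of the real exponential series majorizes the tail
of the operator one. Such a second-order expansion `u = 1 + x + y + R`, with `x`, `y`, `u` and `R`
dominated by the corresponding terms of `eʳ`, is stable under products, the radii adding up;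
the bound on the product's remainder is exact because `eʳ eˢ = eʳ⁺ˢ`. Hence `eᵃ eᵇ eᵃ` and
`e^(a + b + a)` have the same terms `a + b + a` and `(a + b + a)²/2` of orders one and two (the
symmetry of the splitting is what makes the second-order terms agree), and both remainders are
at most `e^ρ - T(ρ)` with `ρ = 2‖a‖ + ‖b‖`. For `a = (Δt/2) A`, `b = Δt B` we get
`ρ = Δt (‖A‖ + ‖B‖)`, and `e^(Δt R) - T(Δt R) ≤ Δt³ (eᴿ - T(R))` because only powers of degree at
least three remain.
-/

open NormedSpace Finset Nat

theorem Real.exp_sub_sum_range_eq_tsum (r : ℝ) (n : ℕ) :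
    Real.exp r - ∑ k ∈ range n, r ^ k / k ! = ∑' k, r ^ (k + n) / (k + n)! := by
  rw [Real.exp_eq_exp_ℝ, congrFun exp_eq_tsum_div,
    ← (Real.summable_pow_div_factorial r).sum_add_tsum_nat_add n, add_sub_cancel_left]

theorem Real.exp_mul_sub_sum_range_le {t R : ℝ} (n : ℕ) (ht₀ : 0 ≤ t) (ht₁ : t ≤ 1)
    (hR : 0 ≤ R) :
    Real.exp (t * R) - ∑ k ∈ range n, (t * R) ^ k / k ! ≤
      t ^ n * (Real.exp R - ∑ k ∈ range n, R ^ k / k !) := by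
  rw [Real.exp_sub_sum_range_eq_tsum, Real.exp_sub_sum_range_eq_tsum, ← tsum_mul_left]
  refine Summable.tsum_le_tsum (fun k => ?_)
    ((Real.summable_pow_div_factorial _).comp_injective (add_left_injective n))
    (((Real.summable_pow_div_factorial R).comp_injective (add_left_injective n)).mul_left _)
  rw [mul_pow, mul_div_assoc]
  exact mul_le_mul_of_nonneg_right (pow_le_pow_of_le_one ht₀ ht₁ (Nat.le_add_left n k))
    (by positivity)

section

variable {𝔸 : Type*} [NormedRing 𝔸]

structure ExpSecondOrderBound (r : ℝ) (u x y : 𝔸) : Prop where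
  norm_linear_le : ‖x‖ ≤ r
  norm_quadratic_le : ‖y‖ ≤ r ^ 2 / 2
  norm_le : ‖u‖ ≤ Real.exp r
  norm_sub_le : ‖u - (1 + x + y)‖ ≤ Real.exp r - (1 + r + r ^ 2 / 2)

namespace ExpSecondOrderBound

variable {r s : ℝ} {u v x x' y y' : 𝔸}

theorem nonneg (h : ExpSecondOrderBound r u x y) : 0 ≤ r :=
  (norm_nonneg x).trans h.norm_linear_le

theorem norm_sub_le_two_mul (h : ExpSecondOrderBound r u x y)
    (h' : ExpSecondOrderBound r v x y) :
    ‖u - v‖ ≤ 2 * (Real.exp r - (1 + r + r ^ 2 / 2)) := by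
  rw [← sub_sub_sub_cancel_right u v (1 + x + y), two_mul]
  exact (_root_.norm_sub_le _ _).trans (add_le_add h.norm_sub_le h'.norm_sub_le)

variable [NormOneClass 𝔸]

theorem norm_one_add_add_le (h : ExpSecondOrderBound r u x y) :
    ‖1 + x + y‖ ≤ 1 + r + r ^ 2 / 2 :=
  (norm_add₃_le ..).trans <| by
    rw [norm_one]
    linarith [h.norm_linear_le, h.norm_quadratic_le]

theorem mul (h : ExpSecondOrderBound r u x y) (h' : ExpSecondOrderBound s v x' y') :
    ExpSecondOrderBound (r + s) (u * v) (x + x') (y + y' + x * x') where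
  norm_linear_le := (norm_add_le _ _).trans (add_le_add h.norm_linear_le h'.norm_linear_le)
  norm_quadratic_le := by
    have := mul_le_mul h.norm_linear_le h'.norm_linear_le (norm_nonneg _) h.nonneg
    linarith [norm_add₃_le (a := y) (b := y') (c := x * x'), norm_mul_le x x',
      h.norm_quadratic_le, h'.norm_quadratic_le]
  norm_le := by
    rw [Real.exp_add]
    exact (norm_mul_le _ _).trans
      (mul_le_mul h.norm_le h'.norm_le (norm_nonneg _) (Real.exp_pos _).le)
  norm_sub_le := by
    have decomp : u * v - (1 + (x + x') + (y + y' + x * x')) =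
        (u - (1 + x + y)) * v + (1 + x + y) * (v - (1 + x' + y')) +
          (x * y' + y * x' + y * y') := by
      noncomm_ring
    have hr := h.nonneg
    have hs := h'.nonneg
    have cross : ‖x * y' + y * x' + y * y'‖ ≤
        r * (s ^ 2 / 2) + r ^ 2 / 2 * s + r ^ 2 / 2 * (s ^ 2 / 2) := by
      refine (norm_add₃_le ..).trans (add_le_add_three ?_ ?_ ?_) <;>
        refine (norm_mul_le _ _).trans (mul_le_mul ?_ ?_ (norm_nonneg _) (by positivity))
      exacts [h.norm_linear_le, h'.norm_quadratic_le, h.norm_quadratic_le, h'.norm_linear_le,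
        h.norm_quadratic_le, h'.norm_quadratic_le]
    calc ‖u * v - (1 + (x + x') + (y + y' + x * x'))‖
      _ ≤ (Real.exp r - (1 + r + r ^ 2 / 2)) * Real.exp s +
            (1 + r + r ^ 2 / 2) * (Real.exp s - (1 + s + s ^ 2 / 2)) +
            (r * (s ^ 2 / 2) + r ^ 2 / 2 * s + r ^ 2 / 2 * (s ^ 2 / 2)) := by
        rw [decomp]
        refine (norm_add₃_le ..).trans (add_le_add_three ?_ ?_ cross) <;>
          refine (norm_mul_le _ _).trans (mul_le_mul ?_ ?_ (norm_nonneg _) ?_)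
        exacts [h.norm_sub_le, h'.norm_le, (norm_nonneg _).trans h.norm_sub_le,
          h.norm_one_add_add_le, h'.norm_sub_le, (by positivity)]
      _ = Real.exp (r + s) - (1 + (r + s) + (r + s) ^ 2 / 2) := by
        rw [Real.exp_add]
        ring

end ExpSecondOrderBound

variable [NormOneClass 𝔸] [NormedAlgebra ℝ 𝔸] [CompleteSpace 𝔸]

theorem NormedSpace.norm_exp_sub_sum_range_le {x : 𝔸} {r : ℝ} (hx : ‖x‖ ≤ r) (n : ℕ) :
    ‖exp x - ∑ k ∈ range n, (k !⁻¹ : ℝ) • x ^ k‖ ≤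
      Real.exp r - ∑ k ∈ range n, r ^ k / k ! := by
  have hnorm := (norm_expSeries_summable' (𝕂 := ℝ) x).comp_injective (add_left_injective n)
  rw [congrFun (exp_eq_tsum ℝ), ← (expSeries_summable' (𝕂 := ℝ) x).sum_add_tsum_nat_add n,
    add_sub_cancel_left, Real.exp_sub_sum_range_eq_tsum]
  refine (norm_tsum_le_tsum_norm hnorm).trans (Summable.tsum_le_tsum (fun k => ?_) hnorm
    ((Real.summable_pow_div_factorial r).comp_injective (add_left_injective n)))
  dsimp only
  rw [norm_smul, norm_inv, Real.norm_natCast, inv_mul_eq_div]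
  gcongr
  exact (norm_pow_le x _).trans (pow_le_pow_left₀ (norm_nonneg x) hx _)

theorem ExpSecondOrderBound.exp {x : 𝔸} {r : ℝ} (hx : ‖x‖ ≤ r) :
    ExpSecondOrderBound r (exp x) x ((2⁻¹ : ℝ) • x ^ 2) where
  norm_linear_le := hx
  norm_quadratic_le := by
    rw [norm_smul, Real.norm_of_nonneg (by norm_num), inv_mul_eq_div]
    gcongr
    exact (norm_pow_le x 2).trans (pow_le_pow_left₀ (norm_nonneg x) hx 2)
  norm_le := by simpa using norm_exp_sub_sum_range_le hx 0
  norm_sub_le := by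
    simpa [sum_range_succ, add_assoc, div_eq_inv_mul] using norm_exp_sub_sum_range_le hx 3

theorem norm_exp_add_add_sub_exp_mul_exp_mul_exp_le (a b : 𝔸) :
    ‖exp (a + b + a) - exp a * exp b * exp a‖ ≤
      2 * (Real.exp (‖a‖ + ‖b‖ + ‖a‖) -
        (1 + (‖a‖ + ‖b‖ + ‖a‖) + (‖a‖ + ‖b‖ + ‖a‖) ^ 2 / 2)) := by
  have hprod := ((ExpSecondOrderBound.exp le_rfl (x := a)).mul
    (ExpSecondOrderBound.exp le_rfl (x := b))).mul (ExpSecondOrderBound.exp le_rfl (x := a))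
  have hquad : (2⁻¹ : ℝ) • a ^ 2 + (2⁻¹ : ℝ) • b ^ 2 + a * b + (2⁻¹ : ℝ) • a ^ 2 + (a + b) * a =
      (2⁻¹ : ℝ) • (a + b + a) ^ 2 := by
    simp only [sq, add_mul, mul_add, smul_add]
    module
  rw [hquad] at hprod
  exact (ExpSecondOrderBound.exp (norm_add₃_le ..)).norm_sub_le_two_mul hprod

end

/-- Second-order accuracy of Strang splitting for bounded linear operators, with a
constant depending only on `‖A‖` and `‖B‖`. -/
theorem strang_splitting_second_order :
    ∃ C : ℝ → ℝ → ℝ,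
      (∀ a b : ℝ, 0 < C a b) ∧
      ∀ (X : Type) [NormedAddCommGroup X] [NormedSpace ℝ X] [CompleteSpace X]
        (A B : X →L[ℝ] X) (Δt : ℝ), Δt ∈ Set.Icc (0:ℝ) 1 →
        ‖exp (Δt • (A + B)) - exp ((Δt / 2) • A) * exp (Δt • B) * exp ((Δt / 2) • A)‖
          ≤ C ‖A‖ ‖B‖ * Δt ^ 3 := by
  refine ⟨fun a b => 2 * Real.exp (a + b), fun a b => by positivity, ?_⟩
  rintro X _ _ _ A B Δt ⟨h₀, h₁⟩
  -- `X →L[ℝ] X` is a `NormOneClass` only when `X` is nontrivial.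
  rcases subsingleton_or_nontrivial X with hX | hX
  · rw [Subsingleton.elim (exp _ - _ : X →L[ℝ] X) 0, norm_zero]
    positivity
  have hsplit : Δt • (A + B) = (Δt / 2) • A + Δt • B + (Δt / 2) • A := by module
  have hnorm : ‖(Δt / 2) • A‖ + ‖Δt • B‖ + ‖(Δt / 2) • A‖ = Δt * (‖A‖ + ‖B‖) := by
    simp only [norm_smul, Real.norm_of_nonneg h₀, Real.norm_of_nonneg (by positivity : 0 ≤ Δt / 2)]
    ring
  have hscale := Real.exp_mul_sub_sum_range_le 3 h₀ h₁ (by positivity : 0 ≤ ‖A‖ + ‖B‖)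
  norm_num [sum_range_succ] at hscale
  rw [hsplit]
  refine (norm_exp_add_add_sub_exp_mul_exp_mul_exp_le _ _).trans ?_
  rw [hnorm]
  nlinarith [pow_nonneg h₀ 3, norm_nonneg A, norm_nonneg B]
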